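/- Let q be a prime power, let α be a generator of the multiplicative group of F_q, let n = q - 1, and let k be an integer with 1 ≤ k < q. Define p(x) = ∏_{i=0}^{k-2}(x - α^i) ∈ F_q[X] and p^{(j)}(x) = p(α^j x). Let j_1, …, j_k be integers that are pairwise distinct modulo n, and for each l let c_l ∈ F_q^n be the evaluation vector (p^{(j_l)}(1), p^{(j_l)}(α), …, p^{(j_l)}(α^{n-1})). Then the vectors c_1, …, c_k span the Reed–Solomon code RS[n,k] = { (m(1), m(α), …, m(α^{n-1})) : m ∈ F_q[X], deg m < k }. -/

import Mathlib

open Polynomial Finset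

lemma coeff_comp_C_mul_X' {F : Type*} [CommSemiring F] (p : Polynomial F) (b : F) (m : ℕ) :
    (p.comp (C b * X)).coeff m = p.coeff m * b ^ m := by
  induction p using Polynomial.induction_on' with
  | add p q hp hq => simp [add_comp, hp, hq, add_mul]
  | monomial e a =>
      rw [monomial_comp, mul_pow, ← C_pow, ← mul_assoc, ← C_mul, coeff_C_mul, coeff_X_pow,
        coeff_monomial]
      by_cases h : m = e
      · subst h; simp
      · simp [h, Ne.symm h]

lemma prod_ident' {F : Type*} [CommRing F] (α : F) (s : ℕ) :
    C α * ((∏ i ∈ range (s + 1), (X - C (α ^ i))).comp (C α * X)) * (X - C (α ^ s))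
      = C (α ^ (s + 1)) * (C α * X - 1) * ∏ i ∈ range (s + 1), (X - C (α ^ i)) := by
  have key : ∀ i : ℕ, C α * (X - C (α ^ i)) = C α * X - C (α ^ (i + 1)) := by
    intro i; rw [mul_sub, ← C_mul, ← pow_succ']
  have h2 : C (α ^ (s+1)) * ∏ i ∈ range (s+1), (X - C (α^i))
      = ∏ i ∈ range (s+1), (C α * X - C (α^(i+1))) := by
    rw [show (C (α^(s+1)) : F[X]) = ∏ _i ∈ range (s+1), C α from by simp [C_pow]]
    rw [← Finset.prod_mul_distrib]
    exact Finset.prod_congr rfl fun i _ => key i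
  have lhs' : C α * ((∏ i ∈ range (s + 1), (X - C (α ^ i))).comp (C α * X)) * (X - C (α ^ s))
      = ∏ i ∈ range (s+1+1), (C α * X - C (α^i)) := by
    rw [Polynomial.prod_comp]
    simp only [sub_comp, X_comp, C_comp]
    rw [mul_comm (C α), mul_assoc, key s, ← Finset.prod_range_succ (fun i => C α * X - C (α^i))]
  have rhs' : C (α^(s+1)) * (C α * X - 1) * ∏ i ∈ range (s+1), (X - C (α^i))
      = ∏ i ∈ range (s+1+1), (C α * X - C (α^i)) := by
    rw [Finset.prod_range_succ' (fun i => C α * X - C (α ^ i)) (s+1), ← h2]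
    simp only [pow_zero, map_one]
    ring
  rw [lhs', ← rhs']

lemma coeff_prod_ne_zero' {F : Type*} [Field F] {α : F} {N : ℕ} (hα : IsPrimitiveRoot α N)
    (r : ℕ) (hr : r < N) : ∀ m ≤ r, (∏ i ∈ range r, (X - C (α ^ i))).coeff m ≠ 0 := by
  have hN : N ≠ 0 := by omega
  have hα0 : α ≠ 0 := hα.ne_zero hN
  set P : Polynomial F := ∏ i ∈ range r, (X - C (α ^ i)) with hP
  have hmonic : P.Monic := monic_prod_of_monic _ _ fun i _ => monic_X_sub_C _
  have hdeg : P.natDegree = r := by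
    rw [hP, natDegree_prod _ _ fun i _ => X_sub_C_ne_zero (α ^ i)]
    simp only [natDegree_X_sub_C, Finset.sum_const, card_range, smul_eq_mul, mul_one]
  suffices H : ∀ d m, m + d = r → P.coeff m ≠ 0 by
    intro m hm; exact H (r - m) m (by omega)
  intro d
  induction d with
  | zero =>
      intro m hm
      simp only [Nat.add_zero] at hm; subst hm
      rw [← hdeg]; rw [hmonic.coeff_natDegree]; exact one_ne_zero
  | succ d ih =>
      intro m hm
      have hm1 : P.coeff (m+1) ≠ 0 := ih (m+1) (by omega)
      obtain ⟨s, rfl⟩ : ∃ s, r = s + 1 := ⟨m + d, by omega⟩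
      have e1 : C (α ^ (s+1)) * (C α * X - 1) * P
          = C (α ^ (s+1)) * (C α * (X * P)) - C (α ^ (s+1)) * P := by ring
      have hid := congrArg (fun q => Polynomial.coeff q (m+1)) ((prod_ident' α s).trans e1)
      simp only [hP, coeff_mul_X_sub_C, coeff_sub, coeff_C_mul, coeff_X_mul,
        coeff_comp_C_mul_X'] at hid
      rw [← hP] at hid
      intro h0
      rw [h0] at hid
      have hz : α ^ (s+1) * P.coeff (m+1) * (α ^ (m+1) - 1) = 0 := by
        linear_combination -hid
      rcases mul_eq_zero.mp hz with hz1 | hz2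
      · rcases mul_eq_zero.mp hz1 with h | h
        · exact pow_ne_zero _ hα0 h
        · exact hm1 h
      · exact hα.pow_ne_one_of_pos_of_lt (Nat.succ_ne_zero m) (by omega) (sub_eq_zero.mp hz2)

/-- With `α` a generator of the multiplicative group of the finite field
`F` of order `q`, `n = q - 1`, `1 ≤ k < q`, `p(x) = ∏_{i=0}^{k-2}(x - α^i)` and
`p^{(j)}(x) = p(α^j x)`: if `j 1, …, j k` are pairwise distinct modulo `n` and `c l` is the
evaluation vector of `p^{(j l)}` at `1, α, …, α^{n-1}`, then `c 1, …, c k` span the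
Reed–Solomon code `RS[n,k]`. -/
theorem scaled_polynomial_codewords_span
    {F : Type*} [Field F] [Fintype F]
    (α : F) (hα : IsPrimitiveRoot α (Fintype.card F - 1))
    (n k : ℕ) (hn : n = Fintype.card F - 1)
    (hk : 1 ≤ k) (hkq : k < Fintype.card F)
    (j : Fin k → ℤ)
    (hj : ∀ l l' : Fin k, Int.ModEq (n : ℤ) (j l) (j l') → l = l')
    (c : Fin k → Fin n → F)
    (hc : ∀ (l : Fin k) (t : Fin n),
      c l t = ((∏ i ∈ Finset.range (k - 1), (X - C (α ^ i))).comp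
        (C (α ^ (j l)) * X)).eval (α ^ (t : ℕ))) :
    (Submodule.span F (Set.range c) : Set (Fin n → F)) =
      {w : Fin n → F | ∃ m : Polynomial F,
        m.degree < (k : ℕ) ∧ ∀ t : Fin n, w t = m.eval (α ^ (t : ℕ))} := by
  have hq : 1 < Fintype.card F := Fintype.one_lt_card
  have hkn : k - 1 < Fintype.card F - 1 := by omega
  have hα0 : α ≠ 0 := hα.ne_zero (by omega)
  set p : Polynomial F := ∏ i ∈ Finset.range (k - 1), (X - C (α ^ i)) with hp
  have hcoeff : ∀ m ≤ k - 1, p.coeff m ≠ 0 := coeff_prod_ne_zero' hα (k - 1) hkn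
  have hPdeg : p.natDegree = k - 1 := by
    rw [hp, natDegree_prod _ _ fun i _ => X_sub_C_ne_zero (α ^ i)]
    simp only [natDegree_X_sub_C, Finset.sum_const, card_range, smul_eq_mul, mul_one]
  have hPdegk : p.natDegree < k := by omega
  set β : Fin k → F := fun l => α ^ (j l) with hβ
  have hβ0 : ∀ l, β l ≠ 0 := fun l => zpow_ne_zero _ hα0
  have hβinj : Function.Injective β := by
    intro l l' h
    apply hj
    have h' : α ^ (j l) = α ^ (j l') := h
    have h1 : α ^ (j l - j l') = 1 := by
      rw [zpow_sub₀ hα0, h', div_self (zpow_ne_zero _ hα0)]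
    have h2 : ((Fintype.card F - 1 : ℕ) : ℤ) ∣ j l - j l' :=
      (hα.zpow_eq_one_iff_dvd _).mp h1
    rw [hn]
    exact (Int.modEq_iff_dvd.mpr h2).symm
  set E : ℕ → Fin n → F := fun m t => (α ^ (t : ℕ)) ^ m with hE
  set A : Matrix (Fin k) (Fin k) F :=
    Matrix.vandermonde β * Matrix.diagonal (fun m : Fin k => p.coeff m) with hA
  have hAapp : ∀ l m : Fin k, A l m = β l ^ (m : ℕ) * p.coeff m := by
    intro l m
    rw [hA, Matrix.mul_diagonal, Matrix.vandermonde_apply]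
  have hdetA : IsUnit A.det := by
    rw [hA, Matrix.det_mul, Matrix.det_diagonal, Matrix.det_vandermonde]
    apply IsUnit.mul
    · rw [isUnit_iff_ne_zero]
      apply Finset.prod_ne_zero_iff.mpr
      intro i _
      apply Finset.prod_ne_zero_iff.mpr
      intro l hl
      exact sub_ne_zero.mpr fun h => (Finset.mem_Ioi.mp hl).ne' (hβinj h)
    · rw [isUnit_iff_ne_zero]
      apply Finset.prod_ne_zero_iff.mpr
      intro m _
      exact hcoeff m (by omega)
  have hcE : ∀ l : Fin k, c l = ∑ m : Fin k, A l m • E (m : ℕ) := by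
    intro l
    funext t
    rw [hc l t, eval_comp, eval_mul, eval_C, eval_X,
      eval_eq_sum_range' hPdegk (α ^ (j l) * α ^ (t : ℕ)), Finset.sum_apply]
    simp only [Pi.smul_apply, smul_eq_mul, hAapp, hE]
    rw [← Fin.sum_univ_eq_sum_range
      (fun i => p.coeff i * (α ^ (j l) * α ^ (t : ℕ)) ^ i) k]
    refine Finset.sum_congr rfl fun m _ => ?_
    rw [mul_pow, hβ]; ring
  have hEmem : ∀ m : Fin k, E (m : ℕ) ∈ Submodule.span F (Set.range c) := by
    intro m
    have hAinv : A⁻¹ * A = 1 := Matrix.nonsing_inv_mul A hdetA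
    have hEeq : E (m : ℕ) = ∑ l : Fin k, A⁻¹ m l • c l := by
      funext t
      rw [Finset.sum_apply]
      simp only [Pi.smul_apply, smul_eq_mul, hcE, Finset.sum_apply]
      simp only [Pi.smul_apply, smul_eq_mul, Finset.mul_sum]
      rw [Finset.sum_comm]
      have : ∀ m' : Fin k, ∑ l : Fin k, A⁻¹ m l * (A l m' * E (m' : ℕ) t)
          = (1 : Matrix (Fin k) (Fin k) F) m m' * E (m' : ℕ) t := by
        intro m'
        rw [← hAinv, Matrix.mul_apply, Finset.sum_mul]
        exact Finset.sum_congr rfl fun l _ => by ring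
      simp only [this, Matrix.one_apply]
      simp
    rw [hEeq]
    exact Submodule.sum_mem _ fun l _ =>
      Submodule.smul_mem _ _ (Submodule.subset_span ⟨l, rfl⟩)
  ext w
  simp only [SetLike.mem_coe, Set.mem_setOf_eq]
  constructor
  · intro hw
    refine Submodule.span_induction
      (p := fun x _ => ∃ m : Polynomial F,
        m.degree < (k : ℕ) ∧ ∀ t : Fin n, x t = m.eval (α ^ (t : ℕ)))
      ?_ ?_ ?_ ?_ hw
    · rintro _ ⟨l, rfl⟩
      refine ⟨p.comp (C (α ^ (j l)) * X), ?_, fun t => hc l t⟩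
      have h1 : (p.comp (C (α ^ (j l)) * X)).natDegree < k := by
        have := natDegree_comp_le (p := p) (q := C (α ^ (j l)) * X)
        have h2 : (C (α ^ (j l)) * X).natDegree ≤ 1 := by
          refine le_trans (natDegree_mul_le) ?_
          simp
        calc (p.comp (C (α ^ (j l)) * X)).natDegree
            ≤ p.natDegree * (C (α ^ (j l)) * X).natDegree := natDegree_comp_le
          _ ≤ p.natDegree * 1 := Nat.mul_le_mul_left _ h2
          _ < k := by omega
      exact degree_le_natDegree.trans_lt (by exact_mod_cast h1)
    · exact ⟨0, by simp [degree_zero], by simp⟩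
    · rintro x y _ _ ⟨P1, h1, e1⟩ ⟨P2, h2, e2⟩
      exact ⟨P1 + P2, lt_of_le_of_lt (degree_add_le _ _) (max_lt h1 h2),
        fun t => by simp [Pi.add_apply, e1 t, e2 t]⟩
    · rintro a x _ ⟨P, h1, e1⟩
      refine ⟨a • P, lt_of_le_of_lt (degree_smul_le _ _) h1, fun t => ?_⟩
      simp [Pi.smul_apply, e1 t]
  · rintro ⟨P, hdegP, hwP⟩
    rcases eq_or_ne P 0 with rfl | hP0
    · have : w = 0 := funext fun t => by simp [hwP t]
      rw [this]; exact Submodule.zero_mem _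
    · have hnd : P.natDegree < k := by
        rwa [← Polynomial.natDegree_lt_iff_degree_lt hP0] at hdegP
      have hw : w = ∑ i ∈ Finset.range k, P.coeff i • E i := by
        funext t
        rw [Finset.sum_apply, hwP t, eval_eq_sum_range' hnd (α ^ (t : ℕ))]
        exact Finset.sum_congr rfl fun i _ => by simp [hE]
      rw [hw]
      refine Submodule.sum_mem _ fun i hi => Submodule.smul_mem _ _ ?_
      exact hEmem ⟨i, Finset.mem_range.mp hi⟩
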